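/- arXiv:1212.0305 — 6 statements merged into one kernel-verified Lean document; each statement's English description precedes it below -/
import Mathlib

section
/- Let S be a set of s-simplices of K and S_0 a connected component of S. Then S_0 is closed if and only if every s-simplex of K contained in V(S_0) belongs to S. -/
open Finset
/-- The vertex set `V(S) = ⋃ S` of a set `S` of simplices. -/
def vertSet {V : Type*} (S : Set (Finset V)) : Set V := ⋃ σ ∈ S, (σ : Set V)

/-- A set `S` of s-simplices of `K` is closed if it contains every s-simplex of `K`
whose vertices all lie in `V(S)`. -/
def IsClosedSet {V : Type*} (K : Finset (Finset V)) (s : ℕ) (S : Set (Finset V)) : Prop :=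
  ∀ σ ∈ K, σ.card = s + 1 → (σ : Set V) ⊆ vertSet S → σ ∈ S

/-- The relation on simplices of `S` of having nonempty intersection. -/
def simpRel {V : Type*} [DecidableEq V] (S : Set (Finset V)) (a b : Finset V) : Prop :=
  a ∈ S ∧ b ∈ S ∧ (a ∩ b).Nonempty

/-- `S0` is a connected component of `S`: an equivalence class of the smallest
equivalence relation on `S` generated by nonempty pairwise intersection. -/
def IsComponent {V : Type*} [DecidableEq V] (S S0 : Set (Finset V)) : Prop :=
  ∃ σ₀ ∈ S, S0 = {τ | τ ∈ S ∧ Relation.EqvGen (simpRel S) σ₀ τ}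

/-- The set of s-simplices of `K`, as a set. -/
def sSimplices {V : Type*} (K : Finset (Finset V)) (s : ℕ) : Set (Finset V) :=
  {σ : Finset V | σ ∈ K ∧ σ.card = s + 1}

/-- The s-chromatic lattice: subsets of `F^s(K)` all of whose connected components
are closed. -/
def LsK {V : Type*} [DecidableEq V] (K : Finset (Finset V)) (s : ℕ) : Set (Set (Finset V)) :=
  {S | S ⊆ sSimplices K s ∧ ∀ S0, IsComponent S S0 → IsClosedSet K s S0}

namespace IsComponent

variable {V : Type*} [DecidableEq V] {S S0 : Set (Finset V)}

theorem subset (h : IsComponent S S0) : S0 ⊆ S := by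
  obtain ⟨σ₀, -, rfl⟩ := h
  exact fun _ hτ => hτ.1

theorem mem_of_inter_nonempty (h : IsComponent S S0) {σ τ : Finset V} (hτ : τ ∈ S0)
    (hσ : σ ∈ S) (hστ : (τ ∩ σ).Nonempty) : σ ∈ S0 := by
  obtain ⟨σ₀, -, rfl⟩ := h
  exact ⟨hσ, hτ.2.trans _ _ _ (.rel _ _ ⟨hτ.1, hσ, hστ⟩)⟩

theorem mem_of_subset_vertSet (h : IsComponent S S0) {σ : Finset V} (hσ : σ ∈ S)
    (hne : σ.Nonempty) (hσV : (σ : Set V) ⊆ vertSet S0) : σ ∈ S0 := by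
  obtain ⟨v, hv⟩ := hne
  obtain ⟨τ, hτ, hvτ⟩ := Set.mem_iUnion₂.mp (hσV hv)
  exact h.mem_of_inter_nonempty hτ hσ ⟨v, Finset.mem_inter.mpr ⟨hvτ, hv⟩⟩

end IsComponent

theorem stmt_5_general {V : Type*} [DecidableEq V]
    (K : Finset (Finset V)) (s : ℕ)
    (S S0 : Set (Finset V)) (h0 : IsComponent S S0) :
    IsClosedSet K s S0 ↔
      ∀ σ ∈ K, σ.card = s + 1 → (σ : Set V) ⊆ vertSet S0 → σ ∈ S := by
  refine ⟨fun hcl σ hσK hcard hσV => h0.subset (hcl σ hσK hcard hσV),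
    fun h σ hσK hcard hσV => ?_⟩
  have hne : σ.Nonempty := Finset.card_pos.mp (by omega)
  exact h0.mem_of_subset_vertSet (h σ hσK hcard hσV) hne hσV

/-- a connected component `S0` of a set `S` of s-simplices is closed
iff every s-simplex of `K` contained in `V(S0)` belongs to `S`. -/
theorem stmt_5 {V : Type*} [Fintype V] [DecidableEq V]
    (K : Finset (Finset V)) (hK : ∀ σ ∈ K, ∀ τ, τ ⊆ σ → τ ∈ K) (s : ℕ)
    (S S0 : Set (Finset V)) (hS : S ⊆ sSimplices K s) (h0 : IsComponent S S0) :
    IsClosedSet K s S0 ↔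
      ∀ σ ∈ K, σ.card = s + 1 → (σ : Set V) ⊆ vertSet S0 → σ ∈ S :=
  stmt_5_general K s S S0 h0
end

section
/- If S and T are sets of s-simplices of K all of whose connected components are closed, then every connected component of S ∩ T is closed. -/
/-! Components grow with the ambient set, so the component `R` of `σ₀` in `S ∩ T` lies inside
the components of `σ₀` in `S` and in `T`. A simplex with all vertices in `V(R)` therefore lies in
both of those closed components, hence in `S ∩ T`; as it shares a vertex with a simplex of `R`,
it lies in `R`. -/

open Finset
def componentOf {V : Type*} [DecidableEq V] (S : Set (Finset V)) (σ₀ : Finset V) :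
    Set (Finset V) :=
  {τ | τ ∈ S ∧ Relation.EqvGen (simpRel S) σ₀ τ}

section

variable {V : Type*}

theorem vertSet_mono {A B : Set (Finset V)} (h : A ⊆ B) : vertSet A ⊆ vertSet B :=
  Set.biUnion_subset_biUnion_left h

variable [DecidableEq V]

theorem isComponent_componentOf {S : Set (Finset V)} {σ₀ : Finset V} (h : σ₀ ∈ S) :
    IsComponent S (componentOf S σ₀) :=
  ⟨σ₀, h, rfl⟩

theorem simpRel_mono {A B : Set (Finset V)} (h : A ⊆ B) {a b : Finset V}
    (hab : simpRel A a b) : simpRel B a b :=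
  ⟨h hab.1, h hab.2.1, hab.2.2⟩

theorem componentOf_mono {A B : Set (Finset V)} (h : A ⊆ B) (σ₀ : Finset V) :
    componentOf A σ₀ ⊆ componentOf B σ₀ := fun _ ⟨hτ, hrel⟩ =>
  ⟨h hτ, Relation.EqvGen.mono (fun _ _ => simpRel_mono h) _ _ hrel⟩

theorem mem_componentOf_of_inter_nonempty {A : Set (Finset V)} {σ₀ σ τ : Finset V}
    (hτ : τ ∈ componentOf A σ₀) (hσ : σ ∈ A) (hτσ : (τ ∩ σ).Nonempty) :
    σ ∈ componentOf A σ₀ :=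
  ⟨hσ, hτ.2.trans _ _ _ (Relation.EqvGen.rel _ _ ⟨hτ.1, hσ, hτσ⟩)⟩

theorem mem_componentOf_of_subset_vertSet {A : Set (Finset V)} {σ₀ σ : Finset V}
    (hσ : σ ∈ A) (hne : σ.Nonempty) (hsub : (σ : Set V) ⊆ vertSet (componentOf A σ₀)) :
    σ ∈ componentOf A σ₀ := by
  obtain ⟨v, hv⟩ := hne
  obtain ⟨τ, hτ, hvτ⟩ := Set.mem_iUnion₂.mp (hsub hv)
  exact mem_componentOf_of_inter_nonempty hτ hσ ⟨v, mem_inter.mpr ⟨hvτ, hv⟩⟩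

end

theorem stmt_6_general {V : Type*} [DecidableEq V]
    (K : Finset (Finset V)) (s : ℕ)
    (S T : Set (Finset V))
    (hSc : ∀ S0, IsComponent S S0 → IsClosedSet K s S0)
    (hTc : ∀ T0, IsComponent T T0 → IsClosedSet K s T0) :
    ∀ R, IsComponent (S ∩ T) R → IsClosedSet K s R := by
  rintro R ⟨σ₀, hσ₀, rfl⟩ σ hσK hσcard hσsub
  have hσS : σ ∈ componentOf S σ₀ :=
    hSc _ (isComponent_componentOf hσ₀.1) σ hσK hσcard
      (hσsub.trans (vertSet_mono (componentOf_mono Set.inter_subset_left σ₀)))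
  have hσT : σ ∈ componentOf T σ₀ :=
    hTc _ (isComponent_componentOf hσ₀.2) σ hσK hσcard
      (hσsub.trans (vertSet_mono (componentOf_mono Set.inter_subset_right σ₀)))
  exact mem_componentOf_of_subset_vertSet ⟨hσS.1, hσT.1⟩ (card_pos.mp (by omega)) hσsub

/-- if all connected components of `S` and of `T` are closed, then all
connected components of `S ∩ T` are closed. -/
theorem stmt_6 {V : Type*} [Fintype V] [DecidableEq V]
    (K : Finset (Finset V)) (hK : ∀ σ ∈ K, ∀ τ, τ ⊆ σ → τ ∈ K) (s : ℕ)
    (S T : Set (Finset V)) (hS : S ⊆ sSimplices K s) (hT : T ⊆ sSimplices K s)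
    (hSc : ∀ S0, IsComponent S S0 → IsClosedSet K s S0)
    (hTc : ∀ T0, IsComponent T T0 → IsClosedSet K s T0) :
    ∀ R, IsComponent (S ∩ T) R → IsClosedSet K s R :=
  stmt_6_general K s S T hSc hTc
end

section
/- As a polynomial in r, the number of (r,s)-colorings of K equals r^{m} − f_s(K)·r^{m−s} + (lower order terms), where m = |V(K)| and f_s(K) is the number of s-simplices of K; i.e., the coefficient of r^m is 1, the coefficients of r^j for m−s < j < m are 0, and the coefficient of r^{m−s} is −f_s(K). -/
open Finset

/-- The number of (r,s)-colorings of the simplicial complex `K` on vertex set `V`: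
maps `V → Fin r` with no monochrome s-simplex. -/
noncomputable def chromCount {V : Type*} [Fintype V] (K : Finset (Finset V)) (r s : ℕ) : ℕ :=
  Nat.card {col : V → Fin r // ∀ σ ∈ K, σ.card = s + 1 → ¬ ∃ c, ∀ v ∈ σ, col v = c}

/-- `simpStirling K i s` : the number of partitions of the vertex set into `i`
s-independent blocks (blocks containing no s-simplex of `K`). -/
noncomputable def simpStirling {V : Type*} [Fintype V] [DecidableEq V]
    (K : Finset (Finset V)) (i s : ℕ) : ℕ :=
  Nat.card {P : Finpartition (Finset.univ : Finset V) //
    P.parts.card = i ∧ ∀ B ∈ P.parts, ∀ σ ∈ K, σ.card = s + 1 → ¬ σ ⊆ B}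

set_option linter.unusedSectionVars false

section stmt10aux
variable {V : Type*} [Fintype V] [DecidableEq V]

open Relation

/-- The relation identifying vertices lying in a common member of `T`. -/
private def mrel (T : Finset (Finset V)) (u v : V) : Prop := ∃ σ ∈ T, u ∈ σ ∧ v ∈ σ

/-- Number of equivalence classes of the equivalence relation generated by `mrel T`. -/
private noncomputable def mcard (T : Finset (Finset V)) : ℕ :=
  Nat.card (Quotient (EqvGen.setoid (mrel T)))

private lemma mk_const' {T : Finset (Finset V)} {σ : Finset V} (hσ : σ ∈ T) {u v : V}
    (hu : u ∈ σ) (hv : v ∈ σ) :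
    (Quotient.mk (EqvGen.setoid (mrel T)) u) = Quotient.mk _ v :=
  Quotient.sound (EqvGen.rel _ _ ⟨σ, hσ, hu, hv⟩)

private lemma mcard_empty' : mcard (∅ : Finset (Finset V)) = Fintype.card V := by
  have h : ∀ a b : V, EqvGen (mrel (∅ : Finset (Finset V))) a b → a = b := by
    intro a b h
    induction h with
    | rel x y h => obtain ⟨σ, hσ, -⟩ := h; simp at hσ
    | refl x => rfl
    | symm x y _ ih => exact ih.symm
    | trans x y z _ _ ih1 ih2 => exact ih1.trans ih2
  have e : Quotient (EqvGen.setoid (mrel (∅ : Finset (Finset V)))) ≃ V :=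
    { toFun := Quotient.lift id h
      invFun := Quotient.mk _
      left_inv := by intro q; induction q using Quotient.inductionOn; rfl
      right_inv := fun v => rfl }
  rw [mcard, Nat.card_congr e, Nat.card_eq_fintype_card]

private lemma mcard_le' (T : Finset (Finset V)) : mcard T ≤ Fintype.card V := by
  rw [← Nat.card_eq_fintype_card]
  exact Nat.card_le_card_of_surjective (Quotient.mk _)
    (fun q => Quotient.inductionOn q fun v => ⟨v, rfl⟩)

private lemma mcard_singleton' {σ : Finset V} (hσ : σ.Nonempty) :
    mcard ({σ} : Finset (Finset V)) + σ.card = Fintype.card V + 1 := by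
  obtain ⟨a0, ha0⟩ := hσ
  set st := EqvGen.setoid (mrel ({σ} : Finset (Finset V))) with hst
  have hresp : ∀ a b : V, EqvGen (mrel ({σ} : Finset (Finset V))) a b →
      (if h : a ∈ σ then (none : Option {x : V // x ∉ σ}) else some ⟨a, h⟩) =
      (if h : b ∈ σ then (none : Option {x : V // x ∉ σ}) else some ⟨b, h⟩) := by
    intro a b h
    induction h with
    | rel x y h =>
      obtain ⟨τ, hτ, hx, hy⟩ := h
      simp only [mem_singleton] at hτ; subst hτ
      rw [dif_pos hx, dif_pos hy]
    | refl x => rfl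
    | symm x y _ ih => exact ih.symm
    | trans x y z _ _ ih1 ih2 => exact ih1.trans ih2
  have e : Quotient st ≃ Option {x : V // x ∉ σ} :=
    { toFun := Quotient.lift
        (fun a => if h : a ∈ σ then (none : Option {x : V // x ∉ σ}) else some ⟨a, h⟩) hresp
      invFun := fun o => o.elim (Quotient.mk st a0) (fun x => Quotient.mk st x.1)
      left_inv := by
        intro q
        induction q using Quotient.inductionOn with
        | h v =>
          by_cases h : v ∈ σ
          · simp only [Quotient.lift_mk, dif_pos h, Option.elim]
            exact mk_const' (mem_singleton_self σ) ha0 h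
          · simp only [Quotient.lift_mk, dif_neg h, Option.elim]
      right_inv := by
        intro o
        match o with
        | none => simp [Option.elim, dif_pos ha0]
        | some ⟨x, hx⟩ => simp [Option.elim, dif_neg hx] }
  have h1 : mcard ({σ} : Finset (Finset V)) = Fintype.card V - σ.card + 1 := by
    rw [mcard, ← hst, Nat.card_congr e, Nat.card_eq_fintype_card, Fintype.card_option,
      Fintype.card_subtype]
    congr 1
    have : filter (fun x => x ∉ σ) univ = univ \ σ := by
      ext x; simp
    rw [this, card_sdiff_of_subset (subset_univ σ), card_univ]
  have h2 : σ.card ≤ Fintype.card V := by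
    simpa using card_le_card (subset_univ σ)
  omega

private lemma fiber_sum' {Q : Type*} [Fintype Q] [DecidableEq Q] (q : V → Q) :
    Fintype.card V = ∑ x : Q, (univ.filter (fun v => q v = x)).card := by
  rw [← card_univ]
  exact card_eq_sum_card_fiberwise (fun x _ => mem_univ _)

private lemma L1' {Q : Type*} [Fintype Q] [DecidableEq Q] (q : V → Q)
    (hq : Function.Surjective q) (A : Finset V)
    (hA : ∀ a ∈ A, ∀ b ∈ A, q a = q b) {a0 : V} (ha0 : a0 ∈ A) :
    Fintype.card Q + A.card ≤ Fintype.card V + 1 := by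
  have hfib : ∀ x : Q, 1 ≤ (univ.filter (fun v => q v = x)).card := by
    intro x
    obtain ⟨v, hv⟩ := hq x
    exact card_pos.mpr ⟨v, by simp [hv]⟩
  have hA' : A.card ≤ (univ.filter (fun v => q v = q a0)).card := by
    apply card_le_card
    intro a ha; simp [hA a ha a0 ha0]
  have key := fiber_sum' q
  have h1 : (q a0) ∈ (univ : Finset Q) := mem_univ _
  rw [← Finset.add_sum_erase _ _ h1] at key
  have h2 : (Fintype.card Q - 1) ≤
      ∑ x ∈ univ.erase (q a0), (univ.filter (fun v => q v = x)).card := by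
    calc Fintype.card Q - 1 = (univ.erase (q a0)).card := by
          rw [card_erase_of_mem h1, card_univ]
      _ = ∑ x ∈ univ.erase (q a0), 1 := by simp
      _ ≤ _ := sum_le_sum (fun x _ => hfib x)
  have hQ1 : 1 ≤ Fintype.card Q := Fintype.card_pos_iff.mpr ⟨q a0⟩
  omega

private lemma L2' {Q : Type*} [Fintype Q] [DecidableEq Q] (q : V → Q)
    (hq : Function.Surjective q) (A B : Finset V)
    (hA : ∀ a ∈ A, ∀ b ∈ A, q a = q b) (hB : ∀ a ∈ B, ∀ b ∈ B, q a = q b)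
    {a0 b0 : V} (ha0 : a0 ∈ A) (hb0 : b0 ∈ B) (hne : q a0 ≠ q b0) :
    Fintype.card Q + A.card + B.card ≤ Fintype.card V + 2 := by
  have hfib : ∀ x : Q, 1 ≤ (univ.filter (fun v => q v = x)).card := by
    intro x
    obtain ⟨v, hv⟩ := hq x
    exact card_pos.mpr ⟨v, by simp [hv]⟩
  have hA' : A.card ≤ (univ.filter (fun v => q v = q a0)).card := by
    apply card_le_card; intro a ha; simp [hA a ha a0 ha0]
  have hB' : B.card ≤ (univ.filter (fun v => q v = q b0)).card := by
    apply card_le_card; intro a ha; simp [hB a ha b0 hb0]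
  have key := fiber_sum' q
  have h1 : (q a0) ∈ (univ : Finset Q) := mem_univ _
  rw [← Finset.add_sum_erase _ _ h1] at key
  have h1b : (q b0) ∈ (univ.erase (q a0)) := mem_erase.mpr ⟨hne.symm, mem_univ _⟩
  rw [← Finset.add_sum_erase _ _ h1b] at key
  have h2 : (Fintype.card Q - 2) ≤
      ∑ x ∈ (univ.erase (q a0)).erase (q b0), (univ.filter (fun v => q v = x)).card := by
    calc Fintype.card Q - 2 = ((univ.erase (q a0)).erase (q b0)).card := by
          rw [card_erase_of_mem h1b, card_erase_of_mem h1, card_univ]; omega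
      _ = ∑ x ∈ (univ.erase (q a0)).erase (q b0), 1 := by simp
      _ ≤ _ := sum_le_sum (fun x _ => hfib x)
  have hQ2 : 2 ≤ Fintype.card Q := by
    have := Fintype.card_le_of_injective (fun b : Bool => if b then q a0 else q b0)
      (by intro x y hxy; cases x <;> cases y <;> simp_all [hne.symm])
    simpa using this
  omega

private lemma mcard_two' (T : Finset (Finset V)) {σ τ : Finset V} (hσ : σ ∈ T) (hτ : τ ∈ T)
    (hne : σ ≠ τ) {n : ℕ} (hn : 1 ≤ n) (hσc : σ.card = n + 1) (hτc : τ.card = n + 1) :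
    mcard T + n + 2 ≤ Fintype.card V + 1 := by
  classical
  set st := EqvGen.setoid (mrel T) with hst
  haveI : Fintype (Quotient st) := Fintype.ofFinite _
  haveI : DecidableEq (Quotient st) := Classical.decEq _
  have hm : mcard T = Fintype.card (Quotient st) := Nat.card_eq_fintype_card
  set q : V → Quotient st := Quotient.mk st with hq
  have hsurj : Function.Surjective q := fun x => Quotient.inductionOn x fun v => ⟨v, rfl⟩
  obtain ⟨a0, ha0⟩ : σ.Nonempty := card_pos.mp (by omega)
  obtain ⟨b0, hb0⟩ : τ.Nonempty := card_pos.mp (by omega)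
  by_cases h : q a0 = q b0
  · have hall : ∀ a ∈ σ ∪ τ, q a = q a0 := by
      intro a ha
      rcases mem_union.mp ha with ha' | ha'
      · exact mk_const' hσ ha' ha0
      · exact (mk_const' hτ ha' hb0).trans h.symm
    have hA : ∀ a ∈ σ ∪ τ, ∀ b ∈ σ ∪ τ, q a = q b := fun a ha b hb =>
      (hall a ha).trans (hall b hb).symm
    have hb : ∃ b ∈ τ, b ∉ σ := by
      by_contra hc
      push_neg at hc
      exact hne ((eq_of_subset_of_card_le hc (by omega)).symm)
    obtain ⟨b, hbτ, hbσ⟩ := hb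
    have hcard : n + 2 ≤ (σ ∪ τ).card := by
      have h1 : insert b σ ⊆ σ ∪ τ := by
        intro x hx
        rcases mem_insert.mp hx with rfl | hx
        · exact mem_union_right _ hbτ
        · exact mem_union_left _ hx
      have := card_le_card h1
      rw [card_insert_of_notMem hbσ] at this
      omega
    have := L1' q hsurj (σ ∪ τ) hA (mem_union_left _ ha0)
    omega
  · have := L2' q hsurj σ τ (fun a ha b hb => mk_const' hσ ha hb)
      (fun a ha b hb => mk_const' hτ ha hb) ha0 hb0 h
    omega

private lemma card_colorings' (T : Finset (Finset V)) (hT : ∀ σ ∈ T, σ.Nonempty) (r : ℕ) :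
    Nat.card {col : V → Fin r // ∀ σ ∈ T, ∃ c, ∀ v ∈ σ, col v = c} = r ^ mcard T := by
  set st := EqvGen.setoid (mrel T) with hst
  have key : ∀ col : V → Fin r, (∀ σ ∈ T, ∃ c, ∀ v ∈ σ, col v = c) ↔
      (∀ a b : V, EqvGen (mrel T) a b → col a = col b) := by
    intro col
    constructor
    · intro h a b hab
      induction hab with
      | rel x y hxy =>
        obtain ⟨σ, hσ, hx, hy⟩ := hxy
        obtain ⟨c, hc⟩ := h σ hσ
        rw [hc x hx, hc y hy]
      | refl x => rfl
      | symm x y _ ih => exact ih.symm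
      | trans x y z _ _ ih1 ih2 => exact ih1.trans ih2
    · intro h σ hσ
      obtain ⟨a, ha⟩ := hT σ hσ
      exact ⟨col a, fun v hv => h v a (EqvGen.rel _ _ ⟨σ, hσ, hv, ha⟩)⟩
  have e : {col : V → Fin r // ∀ σ ∈ T, ∃ c, ∀ v ∈ σ, col v = c} ≃ (Quotient st → Fin r) :=
    { toFun := fun c => Quotient.lift c.1 ((key c.1).mp c.2)
      invFun := fun g => ⟨g ∘ Quotient.mk st, (key _).mpr
        (fun a b h => congrArg g (Quotient.sound h))⟩
      left_inv := fun c => Subtype.ext rfl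
      right_inv := fun g => funext fun q => Quotient.inductionOn q fun v => rfl }
  rw [Nat.card_congr e, Nat.card_fun, mcard]
  congr 1
  simp [Nat.card_eq_fintype_card]

private lemma count_eq' (S : Finset (Finset V)) (hS : ∀ σ ∈ S, σ.Nonempty) (r : ℕ) :
    ((Nat.card {col : V → Fin r // ∀ σ ∈ S, ¬ ∃ c, ∀ v ∈ σ, col v = c} : ℤ)) =
    ∑ T ∈ S.powerset, (-1:ℤ)^T.card * (r:ℤ)^(mcard T) := by
  classical
  set mono : Finset V → (V → Fin r) → Prop := fun σ col => ∃ c, ∀ v ∈ σ, col v = c with hmono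
  have stepA : (Nat.card {col : V → Fin r // ∀ σ ∈ S, ¬ mono σ col} : ℤ) =
      ∑ col : V → Fin r, if (∀ σ ∈ S, ¬ mono σ col) then (1:ℤ) else 0 := by
    rw [sum_boole, Nat.card_eq_fintype_card, Fintype.card_subtype]
  rw [stepA]
  have stepC : ∀ col : V → Fin r, (if (∀ σ ∈ S, ¬ mono σ col) then (1:ℤ) else 0) =
      ∑ T ∈ S.powerset, ∏ σ ∈ T, (if mono σ col then (-1:ℤ) else 0) := by
    intro col
    have hrhs : (∑ T ∈ S.powerset, ∏ σ ∈ T, (if mono σ col then (-1:ℤ) else 0)) =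
        ∏ σ ∈ S, ((if mono σ col then (-1:ℤ) else 0) + 1) := by
      rw [Finset.prod_add]; simp
    rw [hrhs]
    have h1 : ∀ σ ∈ S, ((if mono σ col then (-1:ℤ) else 0) + 1) =
        (if ¬ mono σ col then (1:ℤ) else 0) := by
      intro σ _; by_cases h : mono σ col <;> simp [h]
    rw [Finset.prod_congr rfl h1, Finset.prod_boole]
    by_cases hcond : ∀ σ ∈ S, ¬ mono σ col
    · simp [hcond]
    · simp [hcond]
  simp_rw [stepC]
  rw [Finset.sum_comm]
  apply Finset.sum_congr rfl
  intro T hT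
  have hT' : T ⊆ S := mem_powerset.mp hT
  have stepF : ∀ col : V → Fin r, (∏ σ ∈ T, if mono σ col then (-1:ℤ) else 0) =
      (-1:ℤ)^T.card * (if (∀ σ ∈ T, mono σ col) then (1:ℤ) else 0) := by
    intro col
    have h2 : ∀ σ ∈ T, (if mono σ col then (-1:ℤ) else 0) =
        (-1) * (if mono σ col then (1:ℤ) else 0) := by
      intro σ _; by_cases h : mono σ col <;> simp [h]
    rw [Finset.prod_congr rfl h2, Finset.prod_mul_distrib, Finset.prod_const,
      Finset.prod_boole]
    congr 1
    by_cases hcond : ∀ σ ∈ T, mono σ col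
    · simp [hcond]
    · simp [hcond]
  simp_rw [stepF, ← Finset.mul_sum]
  congr 1
  rw [sum_boole, ← Nat.cast_pow]
  congr 1
  rw [← card_colorings' T (fun σ hσ => hS σ (hT' hσ)) r,
    Nat.card_eq_fintype_card, Fintype.card_subtype]

end stmt10aux

/-- as a polynomial in `r`, the number of (r,s)-colorings of `K` is
`r^m − f_s(K)·r^{m−s} + (lower order terms)` where `m = |V(K)|`. -/
theorem stmt_10 {V : Type*} [Fintype V] [DecidableEq V] [Nonempty V]
    (K : Finset (Finset V)) (hK : ∀ σ ∈ K, ∀ τ, τ ⊆ σ → τ ∈ K)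
    (s : ℕ) (hs : 1 ≤ s) :
    ∃ p : Polynomial ℤ,
      (∀ r : ℕ, (chromCount K r s : ℤ) = p.eval (r : ℤ)) ∧
      p.natDegree ≤ Fintype.card V ∧
      p.coeff (Fintype.card V) = 1 ∧
      (∀ j, Fintype.card V - s < j → j < Fintype.card V → p.coeff j = 0) ∧
      p.coeff (Fintype.card V - s) =
        -((K.filter (fun σ => σ.card = s + 1)).card : ℤ) := by
  classical
  set m := Fintype.card V with hm
  set S := K.filter (fun σ => σ.card = s + 1) with hS
  have hScard : ∀ σ ∈ S, σ.card = s + 1 := fun σ hσ => (mem_filter.mp hσ).2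
  have hSne : ∀ σ ∈ S, σ.Nonempty := fun σ hσ => card_pos.mp (by rw [hScard σ hσ]; omega)
  have hm1 : 1 ≤ m := Fintype.card_pos
  have hmS : ∀ σ ∈ S, s + 1 ≤ m := by
    intro σ hσ
    rw [← hScard σ hσ, hm, ← card_univ]
    exact card_le_card (subset_univ σ)
  set p : Polynomial ℤ :=
    ∑ T ∈ S.powerset, Polynomial.C ((-1:ℤ)^T.card) * Polynomial.X ^ (mcard T) with hp
  have hfact : ∀ T ∈ S.powerset,
      (T = ∅ ∧ mcard T = m) ∨ (T.card = 1 ∧ mcard T + s = m) ∨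
      (2 ≤ T.card ∧ mcard T + s + 1 ≤ m) := by
    intro T hT
    have hT' : T ⊆ S := mem_powerset.mp hT
    rcases eq_or_ne T ∅ with rfl | hTne
    · exact Or.inl ⟨rfl, mcard_empty'⟩
    rcases eq_or_lt_of_le (Finset.one_le_card.mpr (nonempty_of_ne_empty hTne)) with h1 | h2
    · obtain ⟨σ, rfl⟩ := card_eq_one.mp h1.symm
      have hσS : σ ∈ S := hT' (mem_singleton_self σ)
      have := mcard_singleton' (V := V) (σ := σ) (hSne σ hσS)
      rw [hScard σ hσS] at this
      have hms := hmS σ hσS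
      refine Or.inr (Or.inl ⟨h1.symm, by omega⟩)
    · obtain ⟨σ, hσ, τ, hτ, hne⟩ := Finset.one_lt_card.mp h2
      have := mcard_two' T hσ hτ hne hs (hScard σ (hT' hσ)) (hScard τ (hT' hτ))
      exact Or.inr (Or.inr ⟨h2, by omega⟩)
  have hcoeff : ∀ j, p.coeff j =
      ∑ T ∈ S.powerset, (-1:ℤ)^T.card * (if j = mcard T then 1 else 0) := by
    intro j
    rw [hp, Polynomial.finset_sum_coeff]
    apply Finset.sum_congr rfl
    intro T _
    rw [Polynomial.coeff_C_mul, Polynomial.coeff_X_pow]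
  refine ⟨p, ?_, ?_, ?_, ?_, ?_⟩
  · -- evaluation
    intro r
    have h0 : chromCount K r s =
        Nat.card {col : V → Fin r // ∀ σ ∈ S, ¬ ∃ c, ∀ v ∈ σ, col v = c} := by
      rw [chromCount]
      apply Nat.card_congr (Equiv.subtypeEquivRight _)
      intro col
      constructor
      · intro h σ hσ
        exact h σ (mem_filter.mp hσ).1 (mem_filter.mp hσ).2
      · intro h σ hσ hc
        exact h σ (mem_filter.mpr ⟨hσ, hc⟩)
    rw [h0, count_eq' S hSne r, hp]
    rw [Polynomial.eval_finset_sum]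
    simp
  · -- natDegree
    rw [Polynomial.natDegree_le_iff_coeff_eq_zero]
    intro j hj
    rw [hcoeff]
    apply Finset.sum_eq_zero
    intro T hT
    rcases hfact T hT with ⟨-, h⟩ | ⟨-, h⟩ | ⟨-, h⟩ <;>
      · rw [if_neg (by omega)]; ring
  · -- coeff m = 1
    rw [hcoeff]
    rw [Finset.sum_eq_single (∅ : Finset (Finset V))]
    · rw [if_pos mcard_empty'.symm]; simp
    · intro T hT hTne
      rcases hfact T hT with ⟨h0, -⟩ | ⟨-, h⟩ | ⟨-, h⟩
      · exact absurd h0 hTne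
      · rw [if_neg (by omega)]; ring
      · rw [if_neg (by omega)]; ring
    · intro h
      exact absurd (empty_mem_powerset S) h
  · -- intermediate coefficients
    intro j hj1 hj2
    rw [hcoeff]
    apply Finset.sum_eq_zero
    intro T hT
    rcases hfact T hT with ⟨-, h⟩ | ⟨-, h⟩ | ⟨-, h⟩ <;>
      · rw [if_neg (by omega)]; ring
  · -- coeff (m - s)
    rw [hcoeff]
    have hval : ∀ T ∈ S.powerset,
        ((-1:ℤ)^T.card * (if m - s = mcard T then 1 else 0)) =
        (if T.card = 1 then (-1:ℤ) else 0) := by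
      intro T hT
      rcases hfact T hT with ⟨h0, h⟩ | ⟨h0, h⟩ | ⟨h0, h⟩
      · rw [if_neg (by omega), if_neg (by rw [h0]; simp)]
        ring
      · rw [if_pos (by omega), if_pos h0, h0]
        ring
      · rw [if_neg (by omega), if_neg (by omega)]
        ring
    rw [Finset.sum_congr rfl hval, Finset.sum_ite, Finset.sum_const, Finset.sum_const_zero,
      add_zero, ← Finset.powersetCard_eq_filter, Finset.card_powersetCard,
      Nat.choose_one_right]
    simp
end

section
/- For any x < y in a finite poset, the Möbius function value μ(x,y) equals the reduced Euler characteristic of the open interval (x,y), i.e., μ(x,y) = Σ_{a,b ∈ (x,y), a ≤ b} μ(a,b) − 1. -/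
open Finset

open scoped Classical in
/-- for `x < y` in a finite poset with Möbius function `μ`, `μ(x,y)`
equals the reduced Euler characteristic of the open interval `(x,y)`, i.e.
`μ(x,y) = (∑_{a,b ∈ (x,y), a ≤ b} μ(a,b)) − 1`. -/
theorem stmt_11 {P : Type*} [PartialOrder P] [Fintype P]
    (μ : P → P → ℤ)
    (hrefl : ∀ a : P, μ a a = 1)
    (hnle : ∀ a b : P, ¬ a ≤ b → μ a b = 0)
    (hsum : ∀ a b : P, a < b →
      ∑ z ∈ Finset.univ.filter (fun z => a ≤ z ∧ z ≤ b), μ a z = 0)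
    (x y : P) (hxy : x < y) :
    μ x y =
      (∑ a ∈ Finset.univ.filter (fun a => x < a ∧ a < y),
        ∑ b ∈ Finset.univ.filter (fun b => a ≤ b ∧ x < b ∧ b < y), μ a b) - 1 := by
  classical
  set M : Matrix P P ℤ := fun a b => μ a b with hM
  set Z : Matrix P P ℤ := fun a b => if a ≤ b then 1 else 0 with hZ
  -- M * Z = 1
  have hMZ : M * Z = 1 := by
    ext a b
    have key : (∑ z, M a z * Z z b)
        = ∑ z ∈ Finset.univ.filter (fun z => a ≤ z ∧ z ≤ b), μ a z := by
      rw [show (∑ z, M a z * Z z b)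
          = ∑ z ∈ Finset.univ.filter (fun z => z ≤ b), μ a z by
        rw [Finset.sum_filter]
        refine Finset.sum_congr rfl fun z _ => ?_
        simp only [hM, hZ]
        by_cases h : z ≤ b <;> simp [h]]
      refine (Finset.sum_subset ?_ ?_).symm
      · intro z hz
        simp only [Finset.mem_filter, Finset.mem_univ, true_and] at hz ⊢
        exact hz.2
      · intro z hz hz'
        simp only [Finset.mem_filter, Finset.mem_univ, true_and] at hz hz'
        exact hnle a z fun h => hz' ⟨h, hz⟩
    rw [Matrix.mul_apply, Matrix.one_apply, key]
    by_cases hab : a = b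
    · subst hab
      rw [show Finset.univ.filter (fun z => a ≤ z ∧ z ≤ a) = {a} by
        ext z
        simp only [Finset.mem_filter, Finset.mem_univ, true_and, Finset.mem_singleton]
        constructor
        · rintro ⟨h1, h2⟩; exact le_antisymm h2 h1
        · rintro rfl; exact ⟨le_rfl, le_rfl⟩]
      simp [hrefl]
    · rw [if_neg hab]
      by_cases hle : a ≤ b
      · exact hsum a b (lt_of_le_of_ne hle hab)
      · rw [Finset.sum_eq_zero]
        intro z hz
        simp only [Finset.mem_filter, Finset.mem_univ, true_and] at hz
        exact absurd (hz.1.trans hz.2) hle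
  have hZM : Z * M = 1 := mul_eq_one_comm.mp hMZ
  -- dual recursion
  have hdual : ∑ z ∈ Finset.univ.filter (fun z => x ≤ z ∧ z ≤ y), μ z y = 0 := by
    have h0 : (Z * M) x y = 0 := by rw [hZM, Matrix.one_apply, if_neg hxy.ne]
    rw [Matrix.mul_apply] at h0
    have key : (∑ z, Z x z * M z y)
        = ∑ z ∈ Finset.univ.filter (fun z => x ≤ z ∧ z ≤ y), μ z y := by
      rw [show (∑ z, Z x z * M z y)
          = ∑ z ∈ Finset.univ.filter (fun z => x ≤ z), μ z y by
        rw [Finset.sum_filter]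
        refine Finset.sum_congr rfl fun z _ => ?_
        simp only [hM, hZ]
        by_cases h : x ≤ z <;> simp [h]]
      refine (Finset.sum_subset ?_ ?_).symm
      · intro z hz
        simp only [Finset.mem_filter, Finset.mem_univ, true_and] at hz ⊢
        exact hz.1
      · intro z hz hz'
        simp only [Finset.mem_filter, Finset.mem_univ, true_and] at hz hz'
        exact hnle z y fun h => hz' ⟨hz, h⟩
    rw [key] at h0
    exact h0
  -- inner sums
  have hinner : ∀ a ∈ Finset.univ.filter (fun a => x < a ∧ a < y),
      (∑ b ∈ Finset.univ.filter (fun b => a ≤ b ∧ x < b ∧ b < y), μ a b) = - μ a y := by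
    intro a ha
    simp only [Finset.mem_filter, Finset.mem_univ, true_and] at ha
    obtain ⟨hxa, hay⟩ := ha
    have hfe : Finset.univ.filter (fun b => a ≤ b ∧ x < b ∧ b < y)
        = Finset.univ.filter (fun b => a ≤ b ∧ b < y) := by
      ext b
      simp only [Finset.mem_filter, Finset.mem_univ, true_and]
      constructor
      · rintro ⟨h1, _, h3⟩; exact ⟨h1, h3⟩
      · rintro ⟨h1, h2⟩; exact ⟨h1, lt_of_lt_of_le hxa h1, h2⟩
    have hsplit : Finset.univ.filter (fun b => a ≤ b ∧ b ≤ y)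
        = insert y (Finset.univ.filter (fun b => a ≤ b ∧ b < y)) := by
      ext b
      simp only [Finset.mem_filter, Finset.mem_univ, true_and, Finset.mem_insert]
      constructor
      · rintro ⟨h1, h2⟩
        rcases eq_or_lt_of_le h2 with h | h
        · exact Or.inl h
        · exact Or.inr ⟨h1, h⟩
      · rintro (rfl | ⟨h1, h2⟩)
        · exact ⟨hay.le, le_rfl⟩
        · exact ⟨h1, h2.le⟩
    have h0 := hsum a y hay
    rw [hsplit, Finset.sum_insert (by simp)] at h0
    rw [hfe]
    linarith
  rw [Finset.sum_congr rfl hinner]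
  -- split the dual sum
  have hsplit2 : Finset.univ.filter (fun z => x ≤ z ∧ z ≤ y)
      = insert x (insert y (Finset.univ.filter (fun z => x < z ∧ z < y))) := by
    ext z
    simp only [Finset.mem_filter, Finset.mem_univ, true_and, Finset.mem_insert]
    constructor
    · rintro ⟨h1, h2⟩
      rcases eq_or_lt_of_le h1 with h | h
      · exact Or.inl h.symm
      rcases eq_or_lt_of_le h2 with h' | h'
      · exact Or.inr (Or.inl h')
      · exact Or.inr (Or.inr ⟨h, h'⟩)
    · rintro (rfl | rfl | ⟨h1, h2⟩)
      · exact ⟨le_rfl, hxy.le⟩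
      · exact ⟨hxy.le, le_rfl⟩
      · exact ⟨h1.le, h2.le⟩
  rw [hsplit2, Finset.sum_insert (by simp [hxy.ne, lt_irrefl]),
    Finset.sum_insert (by simp)] at hdual
  rw [hrefl] at hdual
  rw [Finset.sum_neg_distrib]
  linarith
end

section
/- For 1 ≤ s ≤ m+1, the reduced Euler characteristic of the order complex of the poset B(m,s) of nonempty subsets of {1,...,m} of cardinality less than s equals (−1)^s·binomial(m−1, s−1). -/
open Finset

/-- The poset `B(m,s)` of nonempty subsets of `{1,…,m}` of cardinality `< s`,
ordered by inclusion. -/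
def Bposet (m s : ℕ) : Type :=
  {A : Finset (Fin m) // A.Nonempty ∧ A.card < s}

instance (m s : ℕ) : PartialOrder (Bposet m s) :=
  Subtype.partialOrder _

/-- The number of chains of `k+1` elements in `B(m,s)`. -/
noncomputable def chainCount (m s k : ℕ) : ℕ :=
  Nat.card {c : Fin (k + 1) → Bposet m s // StrictMono c}

/-!
Let `N(a, k)` be the number of chains of `k+1` elements with top element `a`. Removing the top
gives `N(a, 0) = 1` and `N(a, k+1) = ∑_{b < a} N(b, k)`, so the alternating sums
`χ(a) = ∑_k (-1)^k N(a, k)` satisfy `χ(a) = 1 - ∑_{b < a} χ(b)`. In `B(m,s)` the elements below `A`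
are all nonempty proper subsets of `A`, and `∑_{B ⊆ A} (-1)^|B| = 0` yields `χ(A) = -(-1)^|A|` by
induction. Summing over `A` by cardinality leaves the partial alternating binomial sum
`∑_{j < s} (-1)^j C(m, j) = (-1)^(s-1) C(m-1, s-1)`.
-/

namespace Fin

variable {α : Type*} [Preorder α] {k : ℕ}

lemma strictMono_snoc_iff {d : Fin (k + 1) → α} {a : α} :
    StrictMono (snoc d a : Fin (k + 2) → α) ↔ StrictMono d ∧ d (last k) < a := by
  refine ⟨fun h => ⟨fun i j hij => ?_, ?_⟩, fun h => ?_⟩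
  · simpa using h (castSucc_lt_castSucc_iff.mpr hij)
  · simpa using h (castSucc_lt_last (last k))
  · simpa [insertNth_last'] using strictMono_insertNth_last h.1 a h.2

end Fin

section Chains

variable {α : Type*} [PartialOrder α]

noncomputable def numChainsTo (a : α) (k : ℕ) : ℕ :=
  Nat.card {c : Fin (k + 1) → α // StrictMono c ∧ c (Fin.last k) = a}

def strictMonoEquivSigmaLast (k : ℕ) :
    {c : Fin (k + 1) → α // StrictMono c} ≃
      Σ a : α, {c : Fin (k + 1) → α // StrictMono c ∧ c (Fin.last k) = a} where
  toFun c := ⟨c.1 (Fin.last k), c.1, c.2, rfl⟩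
  invFun p := ⟨p.2.1, p.2.2.1⟩
  left_inv _ := rfl
  right_inv := by rintro ⟨_, c, hc, rfl⟩; rfl

lemma card_strictMono_eq_sum_numChainsTo [Fintype α] (k : ℕ) :
    Nat.card {c : Fin (k + 1) → α // StrictMono c} = ∑ a : α, numChainsTo a k := by
  rw [Nat.card_congr (strictMonoEquivSigmaLast k), Nat.card_sigma]
  rfl

lemma numChainsTo_zero (a : α) : numChainsTo a 0 = 1 := by
  rw [numChainsTo, Nat.card_eq_one_iff_exists]
  have : Subsingleton (Fin (0 + 1)) := inferInstanceAs (Subsingleton (Fin 1))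
  refine ⟨⟨fun _ => a, Subsingleton.strictMono _, rfl⟩, ?_⟩
  rintro ⟨c, -, hc⟩
  exact Subtype.ext (funext fun i => (congrArg c (Subsingleton.elim i _)).trans hc)

def chainsToSuccEquiv (a : α) (k : ℕ) :
    {c : Fin (k + 2) → α // StrictMono c ∧ c (Fin.last (k + 1)) = a} ≃
      Σ b : {b // b < a}, {d : Fin (k + 1) → α // StrictMono d ∧ d (Fin.last k) = b} where
  toFun c := ⟨⟨c.1 (Fin.last k).castSucc, (c.2.1 (Fin.castSucc_lt_last _)).trans_eq c.2.2⟩,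
    Fin.init c.1, c.2.1.comp Fin.strictMono_castSucc, rfl⟩
  invFun p := ⟨Fin.snoc p.2.1 a,
    Fin.strictMono_snoc_iff.mpr ⟨p.2.2.1, p.2.2.2.trans_lt p.1.2⟩, Fin.snoc_last _ _⟩
  left_inv := by
    rintro ⟨c, hc, rfl⟩
    simp [Fin.snoc_init_self]
  right_inv := by
    rintro ⟨⟨b, hb⟩, d, hd, hdb⟩
    exact Sigma.subtype_ext (Subtype.ext (by simp [hdb])) (by simp [Fin.init_snoc])

open Classical in
lemma numChainsTo_succ [Fintype α] (a : α) (k : ℕ) :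
    numChainsTo a (k + 1) = ∑ b ∈ univ.filter (· < a), numChainsTo b k := by
  rw [numChainsTo, Nat.card_congr (chainsToSuccEquiv a k), Nat.card_sigma,
    sum_subtype (univ.filter (· < a)) (p := (· < a)) (by simp)]
  rfl

noncomputable def altChainCount (a : α) (K : ℕ) : ℤ :=
  ∑ k ∈ range K, (-1) ^ k * numChainsTo a k

open Classical in
lemma altChainCount_succ [Fintype α] (a : α) (K : ℕ) :
    altChainCount a (K + 1) = 1 - ∑ b ∈ univ.filter (· < a), altChainCount b K := by
  simp only [altChainCount, sum_range_succ', numChainsTo_succ, numChainsTo_zero, Nat.cast_sum,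
    mul_sum, pow_succ, mul_neg_one, neg_mul, sum_neg_distrib, sum_comm (s := range K), pow_zero,
    Nat.cast_one, mul_one]
  ring

end Chains

lemma sum_range_neg_one_pow_mul_choose {m s : ℕ} (h1 : 1 ≤ s) (h2 : s ≤ m + 1) :
    ∑ j ∈ range s, (-1 : ℤ) ^ j * m.choose j = (-1) ^ (s - 1) * (m - 1).choose (s - 1) := by
  obtain ⟨t, rfl⟩ : ∃ t, s = t + 1 := ⟨s - 1, by omega⟩
  rcases m with _ | n
  · obtain rfl : t = 0 := by omega
    simp
  · simpa using Int.alternating_sum_range_choose_eq_choose (n := n) (m := t)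

section Bposet

variable {m s : ℕ}

instance : Fintype (Bposet m s) :=
  inferInstanceAs (Fintype {A : Finset (Fin m) // A.Nonempty ∧ #A < s})

lemma Bposet.lt_iff {a b : Bposet m s} : a < b ↔ a.1 ⊂ b.1 := Iff.rfl

open Classical in
lemma Bposet.sum_lt_neg_one_pow_card (A : Bposet m s) :
    ∑ b ∈ univ.filter (· < A), (-1 : ℤ) ^ #b.1 = -1 - (-1) ^ #A.1 := by
  have hA : A.1.Nonempty := A.2.1
  have hbelow : ∑ b ∈ univ.filter (· < A), (-1 : ℤ) ^ #b.1 =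
      ∑ B ∈ A.1.ssubsets.erase ∅, (-1 : ℤ) ^ #B := by
    refine sum_bij (fun b _ => b.1) (fun b hb => ?_) (fun b _ c _ h => Subtype.ext h)
      (fun B hB => ?_) (fun _ _ => rfl)
    · simp only [mem_filter, mem_univ, true_and, Bposet.lt_iff] at hb
      simpa [mem_erase, mem_ssubsets, hb, ← nonempty_iff_ne_empty] using b.2.1
    · simp only [mem_erase, mem_ssubsets, ← nonempty_iff_ne_empty] at hB
      exact ⟨⟨B, hB.1, (card_lt_card hB.2).trans A.2.2⟩, mem_filter.mpr ⟨mem_univ _, hB.2⟩, rfl⟩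
  have hempty : ∅ ∈ A.1.ssubsets := mem_ssubsets.mpr (empty_ssubset.mpr hA)
  have htop : A.1 ∈ A.1.powerset := mem_powerset_self _
  have := sum_powerset_neg_one_pow_card_of_nonempty hA
  rw [← add_sum_erase _ _ htop, ← ssubsets, ← add_sum_erase _ _ hempty, ← hbelow] at this
  simp only [card_empty, pow_zero] at this
  linarith

open Classical in
lemma Bposet.altChainCount_eq (K : ℕ) :
    ∀ A : Bposet m s, #A.1 ≤ K → altChainCount A K = -(-1) ^ #A.1 := by
  induction K with
  | zero => exact fun A hA => absurd A.2.1.card_pos (by omega)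
  | succ K ih =>
    intro A hA
    have hbelow : ∀ b ∈ univ.filter (· < A), altChainCount b K = -(-1) ^ #b.1 := fun b hb =>
      ih b (by have := card_lt_card (mem_filter.mp hb).2; omega)
    rw [altChainCount_succ, sum_congr rfl hbelow, sum_neg_distrib, A.sum_lt_neg_one_pow_card]
    ring

lemma Bposet.sum_apply_card (f : ℕ → ℤ) :
    ∑ A : Bposet m s, f #A.1 = ∑ j ∈ Ico 1 s, f j * m.choose j := by
  rw [show ∑ A : Bposet m s, f #A.1 =
      ∑ A ∈ univ.filter (fun A : Finset (Fin m) => A.Nonempty ∧ #A < s), f #A from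
    (sum_subtype (F := (inferInstance : Fintype (Bposet m s))) _ (by simp) (fun A => f #A)).symm]
  rw [← sum_fiberwise_of_maps_to (g := card) (t := Ico 1 s) (fun A hA => by
    simp only [mem_filter, mem_univ, true_and] at hA
    exact mem_Ico.mpr ⟨hA.1.card_pos, hA.2⟩)]
  refine sum_congr rfl fun j hj => ?_
  have : {A ∈ univ.filter (fun A : Finset (Fin m) => A.Nonempty ∧ #A < s) | #A = j} =
      powersetCard j univ := by
    ext A
    simp only [mem_filter, mem_univ, true_and, mem_powersetCard, subset_univ]
    rw [mem_Ico] at hj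
    constructor
    · exact fun h => h.2
    · rintro rfl
      exact ⟨⟨card_pos.mp (by omega), hj.2⟩, rfl⟩
  rw [this, sum_congr rfl fun A hA => by rw [(mem_powersetCard.mp hA).2], sum_const,
    card_powersetCard, card_univ, Fintype.card_fin, nsmul_eq_mul, mul_comm]

lemma Bposet.sum_neg_one_pow_card (h1 : 1 ≤ s) (h2 : s ≤ m + 1) :
    ∑ A : Bposet m s, (-1 : ℤ) ^ #A.1 = (-1) ^ (s - 1) * (m - 1).choose (s - 1) - 1 := by
  rw [Bposet.sum_apply_card, ← sum_range_neg_one_pow_mul_choose h1 h2, range_eq_Ico,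
    sum_eq_sum_Ico_succ_bot h1]
  simp

end Bposet

/-- for `1 ≤ s ≤ m+1`, the reduced Euler characteristic of `B(m,s)`,
namely `∑_k (−1)^k c_k − 1` where `c_k` is the number of chains of `k+1` elements,
equals `(−1)^s · binomial(m−1, s−1)`. -/
theorem stmt_12 (m s : ℕ) (h1 : 1 ≤ s) (h2 : s ≤ m + 1) :
    (∑ k ∈ Finset.range (m + s), (-1 : ℤ) ^ k * chainCount m s k) - 1 =
      (-1) ^ s * ((m - 1).choose (s - 1) : ℤ) := by
  have hchains : ∑ k ∈ range (m + s), (-1 : ℤ) ^ k * chainCount m s k =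
      ∑ A : Bposet m s, altChainCount A (m + s) := by
    simp only [chainCount, card_strictMono_eq_sum_numChainsTo, altChainCount, Nat.cast_sum,
      mul_sum]
    exact sum_comm
  have hcard : ∀ A : Bposet m s, #A.1 ≤ m + s := fun A => by have := A.2.2; omega
  rw [hchains, sum_congr rfl fun A _ => Bposet.altChainCount_eq _ A (hcard A), sum_neg_distrib,
    Bposet.sum_neg_one_pow_card h1 h2]
  obtain ⟨t, rfl⟩ : ∃ t, s = t + 1 := ⟨s - 1, by omega⟩
  rw [Nat.add_sub_cancel, pow_succ]
  ring
end

section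
/- If K is a subcomplex of L with V(K) = V(L), then S(K,r,s) ≥ S(L,r,s) for all r; moreover if S(K,r,s) = S(L,r,s) for some r with (|V|−1)/s ≤ r ≤ |V|−s, then K and L have the same set of s-simplices. -/
open Finset

/-- Any finset can be partitioned into `k` blocks of size at most `s`, provided
`k ≤ card ≤ s * k`. -/
lemma exists_bounded_partition {V : Type*} [DecidableEq V] (t : Finset V) (k s : ℕ)
    (hk : k ≤ t.card) (hks : t.card ≤ s * k) :
    ∃ P : Finpartition t, P.parts.card = k ∧ ∀ B ∈ P.parts, B.card ≤ s := by
  rcases Nat.eq_zero_or_pos k with hk0 | hk0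
  · subst hk0
    simp only [Nat.le_zero, mul_zero] at hks
    have ht : t = ∅ := Finset.card_eq_zero.mp hks
    subst ht
    exact ⟨Finpartition.empty _, by simp [Finpartition.empty], by simp [Finpartition.empty]⟩
  · have htpos : 0 < t.card := lt_of_lt_of_le hk0 hk
    have htne : t ≠ ⊥ := by
      intro h
      rw [h] at htpos
      simp at htpos
    set m := t.card / k with hm
    set b := t.card % k with hb
    have hmb : (k - b) * m + b * (m + 1) = t.card := by
      have h1 : b < k := Nat.mod_lt _ hk0
      have h2 : k * m + b = t.card := by
        rw [hm, hb]; exact Nat.div_add_mod _ _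
      have h3 : b * m ≤ k * m := Nat.mul_le_mul_right m (le_of_lt h1)
      have : (k - b) * m + b * (m + 1) = k * m + b := by
        rw [Nat.sub_mul, Nat.mul_add, mul_one]
        omega
      omega
    have hm1 : 1 ≤ m := Nat.one_le_div_iff hk0 |>.mpr hk
    have hms : m ≤ s := by
      calc m = t.card / k := hm
      _ ≤ s * k / k := Nat.div_le_div_right hks
      _ = s := Nat.mul_div_cancel _ hk0
    refine ⟨(Finpartition.indiscrete htne).equitabilise hmb, ?_, ?_⟩
    · rw [Finpartition.card_parts_equitabilise _ _ (by omega)]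
      have : b < k := Nat.mod_lt _ hk0
      omega
    · intro B hB
      rcases Finpartition.card_eq_of_mem_parts_equitabilise hB with h | h
      · omega
      · -- B has card m + 1; show m + 1 ≤ s
        rcases Nat.lt_or_ge m s with hlt | hge
        · omega
        · -- m ≥ s, so m = s, so t.card = s * k, so b = 0, so no parts of size m+1
          have hmeq : m = s := le_antisymm hms hge
          have : t.card = s * k := by
            have h1 : s * k ≤ t.card := by
              calc s * k = m * k := by rw [hmeq]
              _ = k * m := mul_comm _ _
              _ ≤ k * m + b := Nat.le_add_right _ _
              _ = t.card := by
                  have : k * m + b = t.card := by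
                    rw [hm, hb]; exact Nat.div_add_mod _ _
                  omega
            omega
          have hb0 : b = 0 := by
            rw [hb, this]; exact Nat.mul_mod_left _ _
          exfalso
          have hcard := Finpartition.card_filter_equitabilise_big
            (Finpartition.indiscrete htne) hmb
          have hBmem : B ∈ ((Finpartition.indiscrete htne).equitabilise hmb).parts.filter
              (fun u => u.card = m + 1) := Finset.mem_filter.mpr ⟨hB, h⟩
          have hpos : 0 < (((Finpartition.indiscrete htne).equitabilise hmb).parts.filter
              (fun u => u.card = m + 1)).card := Finset.card_pos.mpr ⟨B, hBmem⟩
          omega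

/-- if `K` is a subcomplex of `L` on the same vertex set, then
`S(K,r,s) ≥ S(L,r,s)` for all `r`; and if equality holds for some `r` with
`(|V|−1)/s ≤ r ≤ |V|−s`, then `K` and `L` have the same s-simplices. -/
theorem stmt_16 {V : Type*} [Fintype V] [DecidableEq V]
    (K L : Finset (Finset V))
    (hK : ∀ σ ∈ K, ∀ τ, τ ⊆ σ → τ ∈ K) (hL : ∀ σ ∈ L, ∀ τ, τ ⊆ σ → τ ∈ L)
    (hKL : K ⊆ L) (s : ℕ) (hs : 1 ≤ s) :
    (∀ r, simpStirling L r s ≤ simpStirling K r s) ∧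
    (∀ r, Fintype.card V - 1 ≤ s * r → r ≤ Fintype.card V - s →
      simpStirling K r s = simpStirling L r s →
      K.filter (fun σ => σ.card = s + 1) = L.filter (fun σ => σ.card = s + 1)) := by
  have hsub : ∀ r, ({P : Finpartition (Finset.univ : Finset V) |
      P.parts.card = r ∧ ∀ B ∈ P.parts, ∀ σ ∈ L, σ.card = s + 1 → ¬ σ ⊆ B} : Set _) ⊆
      {P : Finpartition (Finset.univ : Finset V) |
      P.parts.card = r ∧ ∀ B ∈ P.parts, ∀ σ ∈ K, σ.card = s + 1 → ¬ σ ⊆ B} := by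
    intro r P hP
    exact ⟨hP.1, fun B hB σ hσ => hP.2 B hB σ (hKL hσ)⟩
  have hcard : ∀ (M : Finset (Finset V)) r, simpStirling M r s =
      ({P : Finpartition (Finset.univ : Finset V) |
      P.parts.card = r ∧ ∀ B ∈ P.parts, ∀ σ ∈ M, σ.card = s + 1 → ¬ σ ⊆ B} : Set _).ncard := by
    intro M r
    rw [simpStirling, ← Nat.card_coe_set_eq]
    rfl
  constructor
  · intro r
    rw [hcard K r, hcard L r]
    exact Set.ncard_le_ncard (hsub r) (Set.toFinite _)
  · intro r hr1 hr2 heq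
    ext σ
    simp only [Finset.mem_filter]
    constructor
    · rintro ⟨h1, h2⟩; exact ⟨hKL h1, h2⟩
    · rintro ⟨hσL, hσcard⟩
      refine ⟨?_, hσcard⟩
      by_contra hσK
      -- construct a K-good partition that is not L-good
      have hσu : σ ⊆ Finset.univ := Finset.subset_univ _
      have hn : σ.card ≤ Fintype.card V := by
        rw [← Finset.card_univ]; exact Finset.card_le_card hσu
      set n := Fintype.card V with hn'
      have hns : s + 1 ≤ n := hσcard ▸ hn
      have hr0 : 1 ≤ r := by
        by_contra h
        push_neg at h
        interval_cases r
        simp at hr1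
        omega
      set t := Finset.univ \ σ with ht
      have htc : t.card = n - (s + 1) := by
        rw [ht, Finset.card_sdiff_of_subset hσu, Finset.card_univ, hσcard]
      have hsr : s * r = s * (r - 1) + s := by
        have : r - 1 + 1 = r := by omega
        calc s * r = s * (r - 1 + 1) := by rw [this]
        _ = s * (r - 1) + s := by ring
      obtain ⟨P, hPcard, hPsmall⟩ := exists_bounded_partition t (r - 1) s
        (by omega) (by omega)
      have hσne : σ ≠ ⊥ := by
        intro h
        have : σ.card = 0 := by rw [h]; rfl
        omega
      have hdisj : Disjoint t σ := Finset.sdiff_disjoint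
      have hsup : t ⊔ σ = Finset.univ := by
        rw [ht]
        exact sdiff_sup_cancel hσu
      set Q := P.extend hσne hdisj hsup with hQ
      have hQparts : Q.parts = insert σ P.parts := rfl
      have hQcard : Q.parts.card = r := by
        rw [hQ, Finpartition.card_extend, hPcard]
        omega
      have hQK : Q ∈ ({P : Finpartition (Finset.univ : Finset V) |
          P.parts.card = r ∧ ∀ B ∈ P.parts, ∀ τ ∈ K, τ.card = s + 1 → ¬ τ ⊆ B} : Set _) := by
        refine ⟨hQcard, ?_⟩
        intro B hB τ hτ hτc hτB
        rw [hQparts, Finset.mem_insert] at hB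
        rcases hB with rfl | hB
        · have : τ = B := Finset.eq_of_subset_of_card_le hτB (by omega)
          exact hσK (this ▸ hτ)
        · have := hPsmall B hB
          have := Finset.card_le_card hτB
          omega
      have hQnotL : Q ∉ ({P : Finpartition (Finset.univ : Finset V) |
          P.parts.card = r ∧ ∀ B ∈ P.parts, ∀ τ ∈ L, τ.card = s + 1 → ¬ τ ⊆ B} : Set _) := by
        rintro ⟨-, h⟩
        exact h σ (hQparts ▸ Finset.mem_insert_self _ _) σ hσL hσcard (Finset.Subset.refl _)
      have hssub : ({P : Finpartition (Finset.univ : Finset V) |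
          P.parts.card = r ∧ ∀ B ∈ P.parts, ∀ τ ∈ L, τ.card = s + 1 → ¬ τ ⊆ B} : Set _) ⊂
          {P : Finpartition (Finset.univ : Finset V) |
          P.parts.card = r ∧ ∀ B ∈ P.parts, ∀ τ ∈ K, τ.card = s + 1 → ¬ τ ⊆ B} :=
        ⟨hsub r, fun h => hQnotL (h hQK)⟩
      have := Set.ncard_lt_ncard hssub (Set.toFinite _)
      rw [← hcard K r, ← hcard L r] at this
      omega
end
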